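/- Every binary tree T with m nodes in total contains an edge e = (u,v) such that, after deleting e, each of the two resulting subtrees contains at most 2m/3 of the nodes. -/
import Mathlib


/-- Rooted binary trees (each internal node has exactly two children). -/
inductive BTree (V : Type) where
  | leaf : V → BTree V
  | node : BTree V → BTree V → BTree V

namespace BTree

/-- Total number of nodes of the tree. -/
def size {V : Type} : BTree V → ℕ
  | leaf _ => 1
  | node l r => l.size + r.size + 1

/-- `Child t T` holds if `t` is an immediate subtree of `T`, i.e. `(root T, root t)`
is an edge of `T`. -/
inductive Child {V : Type} : BTree V → BTree V → Prop
  | left (l r : BTree V) : Child l (node l r)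
  | right (l r : BTree V) : Child r (node l r)

/-- `t` is a proper subtree of `T`: it hangs below some edge of `T`.  Deleting that
edge splits `T` into the component `t` (with `size t` nodes) and the rest (with
`size T − size t` nodes). -/
def ProperSubtree {V : Type} (t T : BTree V) : Prop :=
  ∃ c : BTree V, Child c T ∧ Relation.ReflTransGen Child t c

theorem size_odd {V : Type} : ∀ t : BTree V, Odd t.size
  | leaf _ => ⟨0, rfl⟩
  | node l r => by
    obtain ⟨a, ha⟩ := size_odd l
    obtain ⟨b, hb⟩ := size_odd r
    exact ⟨a + b + 1, by simp [size, ha, hb]; ring⟩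

theorem key {V : Type} : ∀ (c : BTree V) (m : ℕ), 3 ≤ m → Odd m → c.size ≤ m →
    2 * m < 3 * c.size →
    ∃ t : BTree V, t.ProperSubtree c ∧ m ≤ 3 * t.size ∧ 3 * t.size ≤ 2 * m := by
  intro c
  induction c with
  | leaf v =>
    intro m h3 _ _ hlt
    simp [size] at hlt
    omega
  | node l r ihl ihr =>
    intro m h3 hodd hle hlt
    obtain ⟨a, ha⟩ := size_odd l
    obtain ⟨b, hb⟩ := size_odd r
    obtain ⟨k, hk⟩ := hodd
    simp only [size] at hle hlt
    by_cases hlr : r.size ≤ l.size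
    · by_cases h2 : 3 * l.size ≤ 2 * m
      · exact ⟨l, ⟨l, Child.left l r, Relation.ReflTransGen.refl⟩, by omega, h2⟩
      · obtain ⟨t, ⟨c', hc', hrt⟩, h1, h2'⟩ := ihl m h3 ⟨k, hk⟩ (by omega) (by omega)
        exact ⟨t, ⟨l, Child.left l r, hrt.tail hc'⟩, h1, h2'⟩
    · by_cases h2 : 3 * r.size ≤ 2 * m
      · exact ⟨r, ⟨r, Child.right l r, Relation.ReflTransGen.refl⟩, by omega, h2⟩
      · obtain ⟨t, ⟨c', hc', hrt⟩, h1, h2'⟩ := ihr m h3 ⟨k, hk⟩ (by omega) (by omega)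
        exact ⟨t, ⟨r, Child.right l r, hrt.tail hc'⟩, h1, h2'⟩

end BTree

/-- balanced edge separator for trees. Every binary tree `T` with
`m ≥ 2` nodes in total contains an edge whose deletion leaves two components, each
with at most `2m/3` nodes.  Equivalently, there is a proper subtree `t` of `T`
with `3·size t ≤ 2·m` and `3·(m − size t) ≤ 2·m`. -/
theorem stmt7 (V : Type) (T : BTree V) (hT : 2 ≤ T.size) :
    ∃ t : BTree V, t.ProperSubtree T ∧
      3 * t.size ≤ 2 * T.size ∧ 3 * (T.size - t.size) ≤ 2 * T.size := by
  obtain ⟨k, hk⟩ := BTree.size_odd T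
  have h3 : 3 ≤ T.size := by omega
  obtain ⟨t, hp, h1, h2⟩ := BTree.key T T.size h3 ⟨k, hk⟩ le_rfl (by omega)
  exact ⟨t, hp, h2, by omega⟩
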